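/- Let n ≥ 1, let R_1, …, R_n and H_1, …, H_n be strictly positive real numbers, fix k ∈ {1,…,n}, and let π_0, π_1, …, π_n and v_{00}, v_{01}, v_{10}, v_{11}, …, v_{n0}, v_{n1} be real numbers satisfying: (i) π_0 + ∑_{j=1}^{n} π_j = 1; (ii) v_{j1}·H_j = R_j·v_{01} for every j ≠ k; (iii) v_{01}·(∑_{j=1}^{n} R_j) = ∑_{j=1, j≠k}^{n} H_j·v_{j1}; (iv) v_{k1}·H_k = π_k + R_k·v_{01}; (v) v_{q0}·H_q = π_q + R_q·v_{00} for every q ∈ {1,…,n}; and (vi) v_{00}·(∑_{j=1}^{n} R_j) = π_0 + ∑_{j=1, j≠k}^{n} H_j·v_{j0} + H_k·v_{k1}. Then the average age of data for link k satisfies v_{00} + ∑_{q=1}^{n} v_{q0} = ∑_{q=1}^{n} π_q/H_q + (1 + ∑_{q=1}^{n} R_q/H_q)·(1/R_k). -/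

import Mathlib

/-!
The equations for the second age component force `v₀₁ = 0`: the total outflow `v₀₁ ∑ R_j`
of state 0 is balanced by the inflow `∑_{j ≠ k} R_j v₀₁`, which misses exactly `R_k v₀₁`.
Hence `H_k v_{k1} = π_k`, and substituting (v) into (vi) together with `π₀ + ∑ π_j = 1`
leaves `R_k v₀₀ = 1`. Solving (v) for each `v_{q0}` and summing gives the closed form.
-/

open Finset

theorem Finset.sum_filter_ne_eq_sub {ι M : Type*} [Fintype ι] [DecidableEq ι] [AddCommGroup M]
    (f : ι → M) (k : ι) : ∑ j ∈ univ.filter (· ≠ k), f j = ∑ j, f j - f k := by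
  rw [filter_ne', sum_erase_eq_sub (mem_univ k)]

namespace SHSAge

variable {ι : Type*} {R H : ι → ℝ} {k : ι}

theorem v0_eq {π v0 : ι → ℝ} {v00 : ℝ} {q : ι} (hHq : H q ≠ 0)
    (h15 : v0 q * H q = π q + R q * v00) :
    v0 q = π q / H q + R q / H q * v00 := by
  field_simp
  linear_combination h15

variable [Fintype ι] [DecidableEq ι]

theorem v01_eq_zero {v01 : ℝ} {v1 : ι → ℝ} (hRk : R k ≠ 0)
    (h16 : ∀ j, j ≠ k → v1 j * H j = R j * v01)
    (h14 : v01 * ∑ j, R j = ∑ j ∈ univ.filter (· ≠ k), H j * v1 j) :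
    v01 = 0 := by
  have inflow : ∑ j ∈ univ.filter (· ≠ k), H j * v1 j = (∑ j, R j - R k) * v01 := by
    rw [← sum_filter_ne_eq_sub, sum_mul]
    exact sum_congr rfl fun j hj => by rw [mul_comm, h16 j (mem_filter.mp hj).2]
  have hRk_v01 : R k * v01 = 0 := by
    rw [inflow] at h14
    linear_combination h14
  exact (mul_eq_zero.mp hRk_v01).resolve_left hRk

theorem mul_v00_eq_one {π0 v00 : ℝ} {π v0 v1 : ι → ℝ}
    (hprob : π0 + ∑ j, π j = 1)
    (h15 : ∀ q, v0 q * H q = π q + R q * v00)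
    (hk : H k * v1 k = π k)
    (h13 : v00 * ∑ j, R j = π0 + ∑ j ∈ univ.filter (· ≠ k), H j * v0 j + H k * v1 k) :
    R k * v00 = 1 := by
  have inflow : ∑ j ∈ univ.filter (· ≠ k), H j * v0 j
      = (∑ j, π j - π k) + (∑ j, R j - R k) * v00 := by
    rw [← sum_filter_ne_eq_sub, ← sum_filter_ne_eq_sub, sum_mul, ← sum_add_distrib]
    exact sum_congr rfl fun j _ => by rw [mul_comm, h15 j]
  rw [inflow, hk] at h13
  linear_combination h13 + hprob

end SHSAge

open SHSAge in
theorem shs_average_age_closed_form_general (n : ℕ) (R H : Fin n → ℝ)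
    (hR : ∀ j, 0 < R j) (hH : ∀ j, 0 < H j) (k : Fin n)
    (π0 : ℝ) (π : Fin n → ℝ) (v00 v01 : ℝ) (v0 v1 : Fin n → ℝ)
    (hprob : π0 + ∑ j, π j = 1)
    (h16 : ∀ j, j ≠ k → v1 j * H j = R j * v01)
    (h14 : v01 * (∑ j, R j) = ∑ j ∈ Finset.univ.filter (· ≠ k), H j * v1 j)
    (h17 : v1 k * H k = π k + R k * v01)
    (h15 : ∀ q, v0 q * H q = π q + R q * v00)
    (h13 : v00 * (∑ j, R j) =
      π0 + (∑ j ∈ Finset.univ.filter (· ≠ k), H j * v0 j) + H k * v1 k) :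
    v00 + ∑ q, v0 q =
      (∑ q, π q / H q) + (1 + ∑ q, R q / H q) * (1 / R k) := by
  have hv01 : v01 = 0 := v01_eq_zero (hR k).ne' h16 h14
  have hvk : H k * v1 k = π k := by linear_combination h17 + R k * hv01
  have hv00 : v00 = 1 / R k := eq_one_div_of_mul_eq_one_right (mul_v00_eq_one hprob h15 hvk h13)
  rw [Fintype.sum_congr _ _ fun q => v0_eq (hH q).ne' (h15 q), sum_add_distrib, ← sum_mul, hv00]
  ring

/-- Under the SHS steady-state equations (13)–(17) for link `k`,
the average age of data for link `k` satisfies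
`v_{00} + ∑_q v_{q0} = ∑_q π_q/H_q + (1 + ∑_q R_q/H_q)·(1/R_k)`. -/
theorem shs_average_age_closed_form (n : ℕ) (hn : 1 ≤ n) (R H : Fin n → ℝ)
    (hR : ∀ j, 0 < R j) (hH : ∀ j, 0 < H j) (k : Fin n)
    (π0 : ℝ) (π : Fin n → ℝ) (v00 v01 : ℝ) (v0 v1 : Fin n → ℝ)
    (hprob : π0 + ∑ j, π j = 1)
    (h16 : ∀ j, j ≠ k → v1 j * H j = R j * v01)
    (h14 : v01 * (∑ j, R j) = ∑ j ∈ Finset.univ.filter (· ≠ k), H j * v1 j)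
    (h17 : v1 k * H k = π k + R k * v01)
    (h15 : ∀ q, v0 q * H q = π q + R q * v00)
    (h13 : v00 * (∑ j, R j) =
      π0 + (∑ j ∈ Finset.univ.filter (· ≠ k), H j * v0 j) + H k * v1 k) :
    v00 + ∑ q, v0 q =
      (∑ q, π q / H q) + (1 + ∑ q, R q / H q) * (1 / R k) :=
  shs_average_age_closed_form_general n R H hR hH k π0 π v00 v01 v0 v1 hprob h16 h14 h17 h15 h13
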